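/- Let ξ_1,…,ξ_W be i.i.d. real random variables with distribution function G whose density is bounded by m_G, let ψ > 0 and u ∈ ℝ, and set ζ_j(u) = 1{ξ_j ≤ u/ψ}. Then there exist finite constants C₀, C₁ (depending only on m_G) such that W^{-2} E| Σ_{j=1}^{W} (ζ_j(u) − ζ_j(0)) |⁴ ≤ C₀ W^{-1} + C₁ W² u⁴ ψ^{-4}. -/

import Mathlib

/-!
Write `b = u / ψ` and `η_j = 1{ξ_j ≤ b} - 1{ξ_j ≤ 0}`. Then `|η_j|` is the indicator of
`ξ_j ∈ Ι 0 b`, so `r := E|η_j| = γ(Ι 0 b) ≤ m_G |b|`, and also `|E η_j| ≤ r`. The centred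
summands `η_j - E η_j` are independent, bounded by `2`, with second moment `≤ r` and fourth moment
`≤ 4 r`; in the binomial expansion of the fourth power of their sum every term containing a lone
centred factor vanishes, which gives `E (∑ (η_j - E η_j))⁴ ≤ 4 W r + 3 W² r²`. Adding back the
mean `∑ E η_j`, of size at most `W r`, and using `2 W² r² ≤ W + W⁴ r⁴`, yields
`E (∑ η_j)⁴ ≤ 44 W + 20 W⁴ r⁴`.
-/

open MeasureTheory Filter ProbabilityTheory

def HasBoundedDensity (γ : Measure ℝ) (mG : ℝ) : Prop :=
  ∃ d : ℝ → ℝ, (∀ x, 0 ≤ d x ∧ d x ≤ mG) ∧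
    γ = (volume : Measure ℝ).withDensity fun x => ENNReal.ofReal (d x)

open Finset

section

variable {Ω : Type*} [MeasurableSpace Ω] {μ : Measure Ω}

theorem MeasureTheory.MemLp.integrable_pow_of_le [IsFiniteMeasure μ] {X : Ω → ℝ} {p k : ℕ}
    (hX : MemLp X p μ) (hk : k ≤ p) : Integrable (fun ω => X ω ^ k) μ := by
  refine (integrable_norm_iff (hX.aestronglyMeasurable.pow k)).mp ?_
  simpa [norm_pow] using
    integrable_norm_pow_of_le hX.aestronglyMeasurable hk hX.integrable_norm_pow'

theorem ProbabilityTheory.IndepFun.integral_add_pow [IsFiniteMeasure μ] {X Y : Ω → ℝ} {n : ℕ}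
    (hXY : IndepFun X Y μ) (hX : MemLp X n μ) (hY : MemLp Y n μ) :
    ∫ ω, (X ω + Y ω) ^ n ∂μ =
      ∑ k ∈ range (n + 1), (∫ ω, X ω ^ k ∂μ) * (∫ ω, Y ω ^ (n - k) ∂μ) * n.choose k := by
  have hint : ∀ k ∈ range (n + 1),
      Integrable (fun ω => X ω ^ k * Y ω ^ (n - k) * n.choose k) μ := fun k hk =>
    ((hXY.comp (measurable_id.pow_const k) (measurable_id.pow_const (n - k))).integrable_mul
      (hX.integrable_pow_of_le (Nat.lt_succ_iff.mp (mem_range.mp hk)))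
      (hY.integrable_pow_of_le (Nat.sub_le n k))).mul_const _
  simp_rw [add_pow]
  rw [integral_finsetSum _ hint]
  refine sum_congr rfl fun k _ => ?_
  rw [integral_mul_const, hXY.integral_fun_comp_mul_comp hX.aemeasurable hY.aemeasurable
    (continuous_pow k).aestronglyMeasurable (continuous_pow (n - k)).aestronglyMeasurable]

section Centered

variable [IsProbabilityMeasure μ] {X Y : Ω → ℝ}

theorem ProbabilityTheory.IndepFun.integral_add_sq_of_integral_eq_zero (hXY : IndepFun X Y μ)
    (hX : MemLp X 2 μ) (hY : MemLp Y 2 μ) (hX0 : ∫ ω, X ω ∂μ = 0) (hY0 : ∫ ω, Y ω ∂μ = 0) :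
    ∫ ω, (X ω + Y ω) ^ 2 ∂μ = ∫ ω, X ω ^ 2 ∂μ + ∫ ω, Y ω ^ 2 ∂μ := by
  rw [hXY.integral_add_pow hX hY]
  simp [sum_range_succ, hX0, hY0, add_comm]

theorem ProbabilityTheory.IndepFun.integral_add_pow_four_of_integral_eq_zero
    (hXY : IndepFun X Y μ)
    (hX : MemLp X 4 μ) (hY : MemLp Y 4 μ) (hX0 : ∫ ω, X ω ∂μ = 0) (hY0 : ∫ ω, Y ω ∂μ = 0) :
    ∫ ω, (X ω + Y ω) ^ 4 ∂μ =
      ∫ ω, X ω ^ 4 ∂μ + 6 * (∫ ω, X ω ^ 2 ∂μ) * (∫ ω, Y ω ^ 2 ∂μ) + ∫ ω, Y ω ^ 4 ∂μ := by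
  rw [hXY.integral_add_pow hX hY]
  simp [sum_range_succ, hX0, hY0, Nat.choose]
  ring

end Centered

namespace ProbabilityTheory.iIndepFun

variable {X : ℕ → Ω → ℝ}

theorem indepFun_sum_range (hX : iIndepFun X μ) (hXm : ∀ j, AEMeasurable (X j) μ) (W : ℕ) :
    IndepFun (fun ω => ∑ j ∈ range W, X j ω) (X W) μ := by
  simpa only [← Finset.sum_apply] using hX.indepFun_sum_range_succ₀ hXm W

variable [IsProbabilityMeasure μ]

theorem integral_sum_range_sq (hX : iIndepFun X μ) (hL : ∀ j, MemLp (X j) 2 μ)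
    (h0 : ∀ j, ∫ ω, X j ω ∂μ = 0) (W : ℕ) :
    ∫ ω, (∑ j ∈ range W, X j ω) ^ 2 ∂μ = ∑ j ∈ range W, ∫ ω, X j ω ^ 2 ∂μ := by
  induction W with
  | zero => simp
  | succ W ih =>
    have hS0 : ∫ ω, ∑ j ∈ range W, X j ω ∂μ = 0 := by
      simp [integral_finsetSum _ fun j _ => (hL j).integrable one_le_two, h0]
    simp only [sum_range_succ]
    have hindep := hX.indepFun_sum_range (fun j => (hL j).aestronglyMeasurable.aemeasurable) W
    rw [hindep.integral_add_sq_of_integral_eq_zero (memLp_finsetSum _ fun j _ => hL j) (hL W)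
      hS0 (h0 W), ih]

theorem integral_sum_range_pow_four_le (hX : iIndepFun X μ) (hL : ∀ j, MemLp (X j) 4 μ)
    (h0 : ∀ j, ∫ ω, X j ω ∂μ = 0) {v q : ℝ} (hv : ∀ j, ∫ ω, X j ω ^ 2 ∂μ ≤ v)
    (hq : ∀ j, ∫ ω, X j ω ^ 4 ∂μ ≤ q) (W : ℕ) :
    ∫ ω, (∑ j ∈ range W, X j ω) ^ 4 ∂μ ≤ W * q + 3 * W ^ 2 * v ^ 2 := by
  have hL2 : ∀ j, MemLp (X j) 2 μ := fun j => (hL j).mono_exponent (by norm_num)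
  have hv0 : 0 ≤ v := (integral_nonneg fun ω => sq_nonneg (X 0 ω)).trans (hv 0)
  induction W with
  | zero => simp
  | succ W ih =>
    have hS0 : ∫ ω, ∑ j ∈ range W, X j ω ∂μ = 0 := by
      simp [integral_finsetSum _ fun j _ => (hL j).integrable (by norm_num), h0]
    have hS2 : ∫ ω, (∑ j ∈ range W, X j ω) ^ 2 ∂μ ≤ W * v := by
      rw [hX.integral_sum_range_sq hL2 h0]
      simpa using sum_le_sum fun j (_ : j ∈ range W) => hv j
    have hX2 : 0 ≤ ∫ ω, X W ω ^ 2 ∂μ := integral_nonneg fun ω => sq_nonneg _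
    simp only [sum_range_succ]
    have hindep := hX.indepFun_sum_range (fun j => (hL j).aestronglyMeasurable.aemeasurable) W
    rw [hindep.integral_add_pow_four_of_integral_eq_zero (memLp_finsetSum _ fun j _ => hL j) (hL W)
      hS0 (h0 W)]
    have := mul_le_mul hS2 (hv W) hX2 (by positivity)
    push_cast
    nlinarith [hq W]

end ProbabilityTheory.iIndepFun

theorem MeasureTheory.integral_add_const_pow_four_le [IsProbabilityMeasure μ] {S : Ω → ℝ}
    (hS : MemLp S 4 μ) (c : ℝ) :
    ∫ ω, (S ω + c) ^ 4 ∂μ ≤ 8 * ∫ ω, S ω ^ 4 ∂μ + 8 * c ^ 4 := by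
  have hS4 := hS.integrable_pow_of_le le_rfl
  calc ∫ ω, (S ω + c) ^ 4 ∂μ ≤ ∫ ω, 8 * (S ω ^ 4 + c ^ 4) ∂μ :=
        integral_mono ((hS.add (memLp_const c)).integrable_pow_of_le le_rfl)
          ((hS4.add (integrable_const _)).const_mul 8) fun ω =>
            (Even.add_pow_le (by decide)).trans_eq (by norm_num)
    _ = 8 * ∫ ω, S ω ^ 4 ∂μ + 8 * c ^ 4 := by
      rw [integral_const_mul, integral_add hS4 (integrable_const _)]
      simp [mul_add]

section BoundedSummands

variable [IsProbabilityMeasure μ] {Y : ℕ → Ω → ℝ}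

theorem ProbabilityTheory.iIndepFun.integral_sum_range_sub_integral_pow_four_le
    (hY : iIndepFun Y μ) (hYm : ∀ j, AEStronglyMeasurable (Y j) μ) (hY1 : ∀ j ω, |Y j ω| ≤ 1)
    {r : ℝ} (hr : ∀ j, ∫ ω, |Y j ω| ∂μ ≤ r) (W : ℕ) :
    ∫ ω, (∑ j ∈ range W, (Y j ω - ∫ ω', Y j ω' ∂μ)) ^ 4 ∂μ ≤ W * (4 * r) + 3 * W ^ 2 * r ^ 2 := by
  set X : ℕ → Ω → ℝ := fun j ω => Y j ω - ∫ ω', Y j ω' ∂μ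
  have hYL : ∀ j, MemLp (Y j) 4 μ := fun j => MemLp.of_bound (hYm j) 1 (ae_of_all _ (hY1 j))
  have hmean : ∀ j, |∫ ω, Y j ω ∂μ| ≤ 1 := fun j => by
    simpa using norm_integral_le_of_norm_le_const (μ := μ) (f := Y j) (ae_of_all _ (hY1 j))
  have hX2 : ∀ j ω, |X j ω| ≤ 2 := fun j ω =>
    (abs_sub _ _).trans (by linarith [hY1 j ω, hmean j])
  have hXL : ∀ j, MemLp (X j) 4 μ := fun j => (hYL j).sub (memLp_const _)
  have hX0 : ∀ j, ∫ ω, X j ω ∂μ = 0 := fun j => by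
    simp [X, integral_sub ((hYL j).integrable (by norm_num)) (integrable_const _)]
  have hXsq : ∀ j, ∫ ω, X j ω ^ 2 ∂μ ≤ r := fun j => calc
    ∫ ω, X j ω ^ 2 ∂μ = Var[Y j; μ] := (variance_eq_integral (hYm j).aemeasurable).symm
    _ ≤ ∫ ω, Y j ω ^ 2 ∂μ := variance_le_expectation_sq (hYm j)
    _ ≤ ∫ ω, |Y j ω| ∂μ := integral_mono ((hYL j).integrable_pow_of_le (by norm_num))
        ((hYL j).integrable (by norm_num)).abs fun ω => by
          nlinarith [sq_abs (Y j ω), abs_nonneg (Y j ω), hY1 j ω]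
    _ ≤ r := hr j
  have hX4 : ∀ j, ∫ ω, X j ω ^ 4 ∂μ ≤ 4 * r := fun j => calc
    ∫ ω, X j ω ^ 4 ∂μ ≤ ∫ ω, 4 * X j ω ^ 2 ∂μ :=
      integral_mono ((hXL j).integrable_pow_of_le le_rfl)
        (((hXL j).integrable_pow_of_le (by norm_num)).const_mul 4) fun ω => by
          have h := sq_le_sq' (abs_le.mp (hX2 j ω)).1 (abs_le.mp (hX2 j ω)).2
          nlinarith [mul_le_mul_of_nonneg_left h (sq_nonneg (X j ω))]
    _ ≤ 4 * r := by rw [integral_const_mul]; linarith [hXsq j]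
  exact (hY.comp (fun j x => x - ∫ ω', Y j ω' ∂μ) fun j => measurable_id.sub_const _)
    |>.integral_sum_range_pow_four_le hXL hX0 hXsq hX4 W

theorem ProbabilityTheory.iIndepFun.integral_sum_range_pow_four_le_of_abs_le_one
    (hY : iIndepFun Y μ) (hYm : ∀ j, AEStronglyMeasurable (Y j) μ) (hY1 : ∀ j ω, |Y j ω| ≤ 1)
    {r : ℝ} (hr : ∀ j, ∫ ω, |Y j ω| ∂μ ≤ r) (hr1 : r ≤ 1) (W : ℕ) :
    ∫ ω, (∑ j ∈ range W, Y j ω) ^ 4 ∂μ ≤ 44 * W + 20 * W ^ 4 * r ^ 4 := by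
  set c := ∑ j ∈ range W, ∫ ω, Y j ω ∂μ
  have hr0 : 0 ≤ r := (integral_nonneg fun ω => abs_nonneg (Y 0 ω)).trans (hr 0)
  have hc : |c| ≤ W * r := (abs_sum_le_sum_abs _ _).trans <| by
    simpa using sum_le_sum fun j (_ : j ∈ range W) => abs_integral_le_integral_abs.trans (hr j)
  have hc4 : c ^ 4 ≤ (W * r) ^ 4 := by
    rw [← Even.pow_abs (by decide)]
    exact pow_le_pow_left₀ (abs_nonneg _) hc 4
  have hW3 : (W : ℝ) ^ 3 ≤ W ^ 4 := by
    rcases W.eq_zero_or_pos with rfl | hW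
    · simp
    · exact pow_le_pow_right₀ (by exact_mod_cast hW) (by norm_num)
  have hamgm : 2 * (W * r) ^ 2 ≤ W + W ^ 4 * r ^ 4 := by
    nlinarith [mul_nonneg W.cast_nonneg (sq_nonneg (1 - W * r ^ 2)),
      mul_le_mul_of_nonneg_right hW3 (pow_nonneg hr0 4)]
  have hsplit : ∀ ω, ∑ j ∈ range W, Y j ω = ∑ j ∈ range W, (Y j ω - ∫ ω', Y j ω' ∂μ) + c :=
    fun ω => by simp [c]
  have hXL : ∀ j, MemLp (fun ω => Y j ω - ∫ ω', Y j ω' ∂μ) 4 μ := fun j =>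
    (MemLp.of_bound (hYm j) 1 (ae_of_all _ (hY1 j))).sub (memLp_const _)
  simp only [hsplit]
  calc ∫ ω, (∑ j ∈ range W, (Y j ω - ∫ ω', Y j ω' ∂μ) + c) ^ 4 ∂μ
      ≤ 8 * ∫ ω, (∑ j ∈ range W, (Y j ω - ∫ ω', Y j ω' ∂μ)) ^ 4 ∂μ + 8 * c ^ 4 :=
        integral_add_const_pow_four_le (memLp_finsetSum _ fun j _ => hXL j) c
    _ ≤ 8 * (W * (4 * r) + 3 * W ^ 2 * r ^ 2) + 8 * (W * r) ^ 4 := by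
        gcongr
        exact hY.integral_sum_range_sub_integral_pow_four_le hYm hY1 hr W
    _ ≤ 44 * W + 20 * W ^ 4 * r ^ 4 := by
        nlinarith [mul_le_of_le_one_right W.cast_nonneg hr1]

end BoundedSummands

theorem HasBoundedDensity.nonneg {γ : Measure ℝ} {mG : ℝ} (h : HasBoundedDensity γ mG) :
    0 ≤ mG := by
  obtain ⟨d, hd, -⟩ := h
  exact (hd 0).1.trans (hd 0).2

theorem HasBoundedDensity.measure_le {γ : Measure ℝ} {mG : ℝ} (h : HasBoundedDensity γ mG)
    (s : Set ℝ) : γ s ≤ ENNReal.ofReal mG * volume s := by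
  obtain ⟨d, hd, rfl⟩ := h
  calc (volume.withDensity fun x => ENNReal.ofReal (d x)) s
      = ∫⁻ x in s, ENNReal.ofReal (d x) := withDensity_apply' _ s
    _ ≤ ∫⁻ _ in s, ENNReal.ofReal mG := lintegral_mono fun x => ENNReal.ofReal_le_ofReal (hd x).2
    _ = ENNReal.ofReal mG * volume s := setLIntegral_const s _

theorem HasBoundedDensity.measureReal_uIoc_le {γ : Measure ℝ} {mG : ℝ}
    (h : HasBoundedDensity γ mG) (a b : ℝ) : γ.real (Set.uIoc a b) ≤ mG * |b - a| := by
  refine ENNReal.toReal_le_of_le_ofReal (by have := h.nonneg; positivity) ?_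
  rw [ENNReal.ofReal_mul h.nonneg, ← Real.volume_uIoc]
  exact h.measure_le _

noncomputable def indicatorIncrement (b x : ℝ) : ℝ :=
  (if x ≤ b then 1 else 0) - (if x ≤ 0 then 1 else 0)

theorem measurable_indicatorIncrement (b : ℝ) : Measurable (indicatorIncrement b) := by
  have hite (c : ℝ) : Measurable fun x : ℝ => if x ≤ c then (1 : ℝ) else 0 :=
    Measurable.ite measurableSet_Iic measurable_const measurable_const
  exact (hite b).sub (hite 0)

theorem abs_indicatorIncrement (b x : ℝ) :
    |indicatorIncrement b x| = (Set.uIoc 0 b).indicator 1 x := by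
  unfold indicatorIncrement
  rcases le_total 0 b with hb | hb
  · rw [Set.uIoc_of_le hb]
    by_cases h1 : x ≤ 0 <;> by_cases h2 : x ≤ b <;> simp [Set.indicator, h1, h2]
    linarith
  · rw [Set.uIoc_of_ge hb]
    by_cases h1 : x ≤ 0 <;> by_cases h2 : x ≤ b <;> simp [Set.indicator, h1, h2]
    linarith

theorem abs_indicatorIncrement_le_one (b x : ℝ) : |indicatorIncrement b x| ≤ 1 := by
  rw [abs_indicatorIncrement]
  exact Set.indicator_le_self' (fun _ _ => zero_le_one) x

theorem integral_abs_indicatorIncrement_comp {ξ : Ω → ℝ} (hξ : AEMeasurable ξ μ) (b : ℝ) :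
    ∫ ω, |indicatorIncrement b (ξ ω)| ∂μ = (μ.map ξ).real (Set.uIoc 0 b) := by
  rw [← integral_map hξ ((measurable_indicatorIncrement b).abs.aestronglyMeasurable)]
  simp_rw [abs_indicatorIncrement]
  exact integral_indicator_one measurableSet_uIoc

end

/-- let `ξ_1, …, ξ_W` be i.i.d. with CDF `G` whose density is bounded by `m_G`,
let `ψ > 0` and `u ∈ ℝ`, and set `ζ_j(u) = 1{ξ_j ≤ u/ψ}`.  Then there exist finite constants
`C₀, C₁` (depending only on `m_G`) such that
`W^{-2} E| Σ_{j=1}^W (ζ_j(u) − ζ_j(0)) |⁴ ≤ C₀ W^{-1} + C₁ W² u⁴ ψ^{-4}`. -/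
theorem indicator_increment_fourth_moment_bound
    {Ω : Type*} [MeasurableSpace Ω] (μ : Measure Ω) [IsProbabilityMeasure μ]
    (γ : Measure ℝ) [IsProbabilityMeasure γ] (mG : ℝ) (hdens : HasBoundedDensity γ mG)
    (ξ : ℕ → Ω → ℝ) (hmeas : ∀ j, Measurable (ξ j))
    (hdist : ∀ j, μ.map (ξ j) = γ)
    (hindep : iIndepFun ξ μ) :
    ∃ C₀ C₁ : ℝ, 0 ≤ C₀ ∧ 0 ≤ C₁ ∧
      ∀ (W : ℕ) (ψ u : ℝ), 0 < ψ →
        ((W : ℝ) ^ 2)⁻¹ *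
            ∫ ω, |∑ j ∈ Finset.range W,
                ((if ξ j ω ≤ u / ψ then (1 : ℝ) else 0) -
                  (if ξ j ω ≤ 0 then (1 : ℝ) else 0))| ^ 4 ∂μ ≤
          C₀ * (W : ℝ)⁻¹ + C₁ * (W : ℝ) ^ 2 * u ^ 4 / ψ ^ 4 := by
  refine ⟨44, 20 * mG ^ 4, by norm_num, by have := hdens.nonneg; positivity, fun W ψ u hψ => ?_⟩
  have h4 : Even 4 := by decide
  set r := γ.real (Set.uIoc 0 (u / ψ))
  have hmoment : ∫ ω, (∑ j ∈ range W, indicatorIncrement (u / ψ) (ξ j ω)) ^ 4 ∂μ ≤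
      44 * W + 20 * W ^ 4 * r ^ 4 :=
    (hindep.comp _ fun _ => measurable_indicatorIncrement (u / ψ))
      |>.integral_sum_range_pow_four_le_of_abs_le_one
        (fun j => ((measurable_indicatorIncrement _).comp (hmeas j)).aestronglyMeasurable)
        (fun j ω => abs_indicatorIncrement_le_one _ _)
        (fun j => (integral_abs_indicatorIncrement_comp (hmeas j).aemeasurable _).trans_le
          (by rw [hdist j]))
        measureReal_le_one W
  have hr : r ^ 4 ≤ mG ^ 4 * u ^ 4 / ψ ^ 4 := by
    have hr1 : r ≤ mG * |u| / ψ := by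
      simpa [abs_div, abs_of_pos hψ, mul_div_assoc] using hdens.measureReal_uIoc_le 0 (u / ψ)
    calc r ^ 4 ≤ (mG * |u| / ψ) ^ 4 := pow_le_pow_left₀ measureReal_nonneg hr1 4
      _ = mG ^ 4 * u ^ 4 / ψ ^ 4 := by rw [div_pow, mul_pow, h4.pow_abs]
  simp_rw [h4.pow_abs]
  calc ((W : ℝ) ^ 2)⁻¹ * ∫ ω, (∑ j ∈ range W, indicatorIncrement (u / ψ) (ξ j ω)) ^ 4 ∂μ
      ≤ ((W : ℝ) ^ 2)⁻¹ * (44 * W + 20 * W ^ 4 * (mG ^ 4 * u ^ 4 / ψ ^ 4)) := by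
        gcongr
        exact hmoment.trans (by gcongr)
    _ = 44 * (W : ℝ)⁻¹ + 20 * mG ^ 4 * (W : ℝ) ^ 2 * u ^ 4 / ψ ^ 4 := by
        rcases W.eq_zero_or_pos with rfl | hW
        · simp
        · field_simp
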